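/- Let T > 0 and let f, g have Fourier coefficients (f_{n,m}), (g_{n,m}) each admitting a representation of the form f_{n,m} = a_{n,m}(|n²−m|+1/T)^{−1/2} + a_n |n²−m|^{−1} χ_{|n²−m|>1/T} with Σ|a_{n,m}|² ≤ 1, Σ|a_n|² ≤ 1 (and similarly for g with coefficients b). Then |Σ_{n,m} f_{n,m} g_{n,m}| ≤ C T for an absolute constant C. -/

import Mathlib

/-!
Write `D = |(n+1)² − m|`. Then `|f_{n,m}| ≤ |a_{n,m}| (D + 1/T)^{-1/2} + |a_n| D⁻¹ χ_{D > 1/T}`, and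
`(D + 1/T)^{-1} ≤ T`, while for fixed `n` the integer `(n+1)² − m` runs over `ℤ` once, so that
`Σ_m D⁻² χ_{D > 1/T} ≤ 2 Σ_{j > 1/T} j⁻² ≤ 4T`. Hence `Σ |f_{n,m}|² ≤ 2T + 8T`, likewise for `g`,
and `|f g| ≤ (|f|² + |g|²)/2` gives `|Σ f g| ≤ 10 T`.
-/

open Finset

theorem norm_tsum_mul_le_of_summable_sq {ι R : Type*} [NonUnitalSeminormedRing R]
    {f g : ι → R} (hf : Summable fun i => ‖f i‖ ^ 2) (hg : Summable fun i => ‖g i‖ ^ 2) :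
    ‖∑' i, f i * g i‖ ≤ (∑' i, ‖f i‖ ^ 2 + ∑' i, ‖g i‖ ^ 2) / 2 := by
  have hle : ∀ i, ‖f i * g i‖ ≤ (‖f i‖ ^ 2 + ‖g i‖ ^ 2) / 2 := fun i =>
    (norm_mul_le _ _).trans (by linarith [two_mul_le_add_sq ‖f i‖ ‖g i‖])
  have hsum := (hf.add hg).div_const 2
  have hnorm : Summable fun i => ‖f i * g i‖ := .of_nonneg_of_le (fun _ => norm_nonneg _) hle hsum
  calc ‖∑' i, f i * g i‖ ≤ ∑' i, ‖f i * g i‖ := norm_tsum_le_tsum_norm hnorm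
    _ ≤ ∑' i, (‖f i‖ ^ 2 + ‖g i‖ ^ 2) / 2 := hnorm.tsum_le_tsum hle hsum
    _ = (∑' i, ‖f i‖ ^ 2 + ∑' i, ‖g i‖ ^ 2) / 2 := by rw [tsum_div_const, hf.tsum_add hg]

theorem summable_and_tsum_prod_le {α β : Type*} {h : α × β → ℝ} {c : α → ℝ} (h0 : ∀ q, 0 ≤ h q)
    (hrow : ∀ x, Summable fun y => h (x, y)) (hbd : ∀ x, ∑' y, h (x, y) ≤ c x)
    (hc : Summable c) : Summable h ∧ ∑' q, h q ≤ ∑' x, c x := by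
  have hcol : Summable fun x => ∑' y, h (x, y) :=
    .of_nonneg_of_le (fun _ => tsum_nonneg fun _ => h0 _) hbd hc
  have hs : Summable h := (summable_prod_of_nonneg fun q => h0 q).mpr ⟨hrow, hcol⟩
  exact ⟨hs, (hs.tsum_prod' hrow).trans_le (hcol.tsum_le_tsum hbd hc)⟩

theorem summable_and_tsum_natAbs_sub_le {φ : ℕ → ℝ} (h0 : ∀ j, 0 ≤ φ j) (hφ : Summable φ) (N : ℤ) :
    Summable (fun m : ℤ => φ (N - m).natAbs) ∧ ∑' m : ℤ, φ (N - m).natAbs ≤ 2 * ∑' j, φ j := by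
  have hpos : Summable fun n : ℕ => φ (n : ℤ).natAbs := by
    simp only [Int.natAbs_natCast]; exact hφ
  have hneg : Summable fun n : ℕ => φ (-(n : ℤ)).natAbs := by
    simp only [Int.natAbs_neg, Int.natAbs_natCast]; exact hφ
  have hs : Summable fun k : ℤ => φ k.natAbs := .of_nat_of_neg hpos hneg
  have hshift : Summable fun m : ℤ => φ (N - m).natAbs :=
    hs.comp_injective (sub_right_injective (b := N))
  refine ⟨hshift, ?_⟩
  have hreindex := (Equiv.subLeft N).tsum_eq fun k => φ k.natAbs
  simp only [Equiv.subLeft_apply] at hreindex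
  rw [hreindex, Summable.tsum_of_nat_of_neg (f := fun k : ℤ => φ k.natAbs) hpos hneg]
  simp only [Int.natAbs_neg, Int.natAbs_natCast, Int.natAbs_zero]
  linarith [h0 0]

noncomputable def invSqTail (x : ℝ) (j : ℕ) : ℝ := if x < j then ((j : ℝ) ^ 2)⁻¹ else 0

theorem invSqTail_nonneg (x : ℝ) (j : ℕ) : 0 ≤ invSqTail x j := by
  unfold invSqTail; split_ifs <;> positivity

theorem summable_and_tsum_invSqTail_le {x : ℝ} (hx : 0 < x) :
    Summable (invSqTail x) ∧ ∑' j, invSqTail x j ≤ 2 / x := by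
  have hpartial : ∀ n, ∑ j ∈ range n, invSqTail x j ≤ 2 / x := fun n =>
    calc ∑ j ∈ range n, invSqTail x j = ∑ j ∈ Ioo ⌊x⌋₊ n, ((j : ℝ) ^ 2)⁻¹ := by
          simp only [invSqTail]
          rw [← sum_filter]
          congr 1
          ext j
          simp [Nat.floor_lt hx.le, and_comm]
      _ ≤ 2 / (⌊x⌋₊ + 1) := sum_Ioo_inv_sq_le _ _
      _ ≤ 2 / x := by gcongr; exact (Nat.lt_floor_add_one x).le
  exact ⟨summable_of_sum_range_le (invSqTail_nonneg x) hpartial,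
    Real.tsum_le_of_sum_range_le (invSqTail_nonneg x) hpartial⟩

theorem summable_and_tsum_invSqTail_natAbs_sub_le {x : ℝ} (hx : 0 < x) (N : ℤ) :
    Summable (fun m : ℤ => invSqTail x (N - m).natAbs) ∧
      ∑' m : ℤ, invSqTail x (N - m).natAbs ≤ 4 / x := by
  obtain ⟨hs, hle⟩ := summable_and_tsum_invSqTail_le hx
  obtain ⟨hs', hle'⟩ := summable_and_tsum_natAbs_sub_le (invSqTail_nonneg x) hs N
  exact ⟨hs', by linarith [show 4 / x = 2 * (2 / x) by ring]⟩

theorem rpow_neg_half_sq_le {d T : ℝ} (hd : 0 ≤ d) (hT : 0 < T) :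
    ((d + 1 / T) ^ (-(1 / 2) : ℝ)) ^ 2 ≤ T := by
  have hpos : 0 < d + 1 / T := by positivity
  rw [← Real.rpow_natCast, ← Real.rpow_mul hpos.le]
  norm_num
  rw [Real.rpow_neg_one]
  calc (d + T⁻¹)⁻¹ ≤ T⁻¹⁻¹ := inv_anti₀ (by positivity) (by linarith)
    _ = T := inv_inv T

theorem norm_sq_le_of_eq_rpow_add_ite {T : ℝ} (hT : 0 < T) (j : ℕ) {c cc z : ℂ}
    (hz : z = c * (((j + 1 / T) ^ (-(1 / 2) : ℝ) : ℝ) : ℂ)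
      + if 1 / T < (j : ℝ) then cc * (((j : ℝ)⁻¹ : ℝ) : ℂ) else 0) :
    ‖z‖ ^ 2 ≤ 2 * T * ‖c‖ ^ 2 + 2 * ‖cc‖ ^ 2 * invSqTail (1 / T) j := by
  have hmain : ‖c * (((j + 1 / T) ^ (-(1 / 2) : ℝ) : ℝ) : ℂ)‖ ^ 2 ≤ T * ‖c‖ ^ 2 := by
    rw [norm_mul, Complex.norm_real, Real.norm_eq_abs, mul_pow, sq_abs, mul_comm]
    gcongr
    exact rpow_neg_half_sq_le j.cast_nonneg hT
  have htail : ‖if 1 / T < (j : ℝ) then cc * (((j : ℝ)⁻¹ : ℝ) : ℂ) else 0‖ ^ 2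
      = ‖cc‖ ^ 2 * invSqTail (1 / T) j := by
    unfold invSqTail
    split_ifs
    · rw [norm_mul, Complex.norm_real, Real.norm_eq_abs, mul_pow, sq_abs, inv_pow]
    · simp
  subst hz
  calc _ ≤ (‖c * (((j + 1 / T) ^ (-(1 / 2) : ℝ) : ℝ) : ℂ)‖
        + ‖if 1 / T < (j : ℝ) then cc * (((j : ℝ)⁻¹ : ℝ) : ℂ) else 0‖) ^ 2 := by
        gcongr; exact norm_add_le _ _
    _ ≤ 2 * (‖c * (((j + 1 / T) ^ (-(1 / 2) : ℝ) : ℝ) : ℂ)‖ ^ 2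
        + ‖if 1 / T < (j : ℝ) then cc * (((j : ℝ)⁻¹ : ℝ) : ℂ) else 0‖ ^ 2) := add_sq_le
    _ ≤ _ := by rw [htail]; linarith

theorem summable_and_tsum_sq_norm_le {T : ℝ} (hT : 0 < T) {a f : ℕ → ℤ → ℂ} {aa : ℕ → ℂ}
    (ha : Summable fun q : ℕ × ℤ => ‖a q.1 q.2‖ ^ 2) (hA : ∑' q : ℕ × ℤ, ‖a q.1 q.2‖ ^ 2 ≤ 1)
    (haa : Summable fun n => ‖aa n‖ ^ 2) (hAA : ∑' n, ‖aa n‖ ^ 2 ≤ 1)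
    (hf : ∀ n m, f n m =
      a n m * ((|((n : ℝ) + 1) ^ 2 - (m : ℝ)| + 1 / T) ^ (-(1 / 2) : ℝ) : ℝ)
        + if 1 / T < |((n : ℝ) + 1) ^ 2 - (m : ℝ)| then
            aa n * ((|((n : ℝ) + 1) ^ 2 - (m : ℝ)|⁻¹ : ℝ) : ℂ) else 0) :
    Summable (fun q : ℕ × ℤ => ‖f q.1 q.2‖ ^ 2) ∧ ∑' q : ℕ × ℤ, ‖f q.1 q.2‖ ^ 2 ≤ 10 * T := by
  set k : ℕ × ℤ → ℕ := fun q => (((q.1 : ℤ) + 1) ^ 2 - q.2).natAbs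
  have hpoint : ∀ q : ℕ × ℤ, ‖f q.1 q.2‖ ^ 2
      ≤ 2 * T * ‖a q.1 q.2‖ ^ 2 + 2 * (‖aa q.1‖ ^ 2 * invSqTail (1 / T) (k q)) := by
    rintro ⟨n, m⟩
    have hk : |((n : ℝ) + 1) ^ 2 - (m : ℝ)| = (k (n, m) : ℝ) := by
      simp only [k, Nat.cast_natAbs]
      push_cast
      rfl
    have hfk := hf n m
    rw [hk] at hfk
    rw [← mul_assoc]
    exact norm_sq_le_of_eq_rpow_add_ite hT (k (n, m)) hfk
  have hrow (n : ℕ) : (Summable fun m => ‖aa n‖ ^ 2 * invSqTail (1 / T) (k (n, m))) ∧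
      ∑' m, ‖aa n‖ ^ 2 * invSqTail (1 / T) (k (n, m)) ≤ ‖aa n‖ ^ 2 * (4 * T) := by
    obtain ⟨hs, hle⟩ :=
      summable_and_tsum_invSqTail_natAbs_sub_le (one_div_pos.mpr hT) (((n : ℤ) + 1) ^ 2)
    rw [div_div_eq_mul_div, div_one] at hle
    exact ⟨hs.mul_left _, by rw [tsum_mul_left]; gcongr⟩
  have htail0 (q : ℕ × ℤ) : 0 ≤ ‖aa q.1‖ ^ 2 * invSqTail (1 / T) (k q) :=
    mul_nonneg (sq_nonneg _) (invSqTail_nonneg _ _)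
  obtain ⟨htail, htailT⟩ := summable_and_tsum_prod_le htail0 (fun n => (hrow n).1)
    (fun n => (hrow n).2) (haa.mul_right _)
  rw [tsum_mul_right] at htailT
  have hbound := (ha.mul_left (2 * T)).add (htail.mul_left 2)
  have hs := Summable.of_nonneg_of_le (fun _ => sq_nonneg _) hpoint hbound
  refine ⟨hs, (hs.tsum_le_tsum hpoint hbound).trans ?_⟩
  rw [(ha.mul_left _).tsum_add (htail.mul_left _), tsum_mul_left, tsum_mul_left]
  nlinarith

theorem tripleNorm_bilinear_bound :
    ∃ C > 0, ∀ (T : ℝ), 0 < T →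
      ∀ (a b : ℕ → ℤ → ℂ) (aa bb : ℕ → ℂ) (f g : ℕ → ℤ → ℂ),
      Summable (fun q : ℕ × ℤ => ‖a q.1 q.2‖ ^ 2) →
      (∑' q : ℕ × ℤ, ‖a q.1 q.2‖ ^ 2) ≤ 1 →
      Summable (fun n : ℕ => ‖aa n‖ ^ 2) → (∑' n : ℕ, ‖aa n‖ ^ 2) ≤ 1 →
      Summable (fun q : ℕ × ℤ => ‖b q.1 q.2‖ ^ 2) →
      (∑' q : ℕ × ℤ, ‖b q.1 q.2‖ ^ 2) ≤ 1 →
      Summable (fun n : ℕ => ‖bb n‖ ^ 2) → (∑' n : ℕ, ‖bb n‖ ^ 2) ≤ 1 →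
      (∀ n m, f n m =
        a n m * ((|(((n : ℝ) + 1)) ^ 2 - (m : ℝ)| + 1 / T) ^ (-(1 / 2) : ℝ) : ℝ)
          + (if 1 / T < |(((n : ℝ) + 1)) ^ 2 - (m : ℝ)| then
              aa n * ((|(((n : ℝ) + 1)) ^ 2 - (m : ℝ)|⁻¹ : ℝ) : ℂ) else 0)) →
      (∀ n m, g n m =
        b n m * ((|(((n : ℝ) + 1)) ^ 2 - (m : ℝ)| + 1 / T) ^ (-(1 / 2) : ℝ) : ℝ)
          + (if 1 / T < |(((n : ℝ) + 1)) ^ 2 - (m : ℝ)| then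
              bb n * ((|(((n : ℝ) + 1)) ^ 2 - (m : ℝ)|⁻¹ : ℝ) : ℂ) else 0)) →
      ‖∑' q : ℕ × ℤ, f q.1 q.2 * g q.1 q.2‖ ≤ C * T := by
  refine ⟨10, by norm_num, fun T hT a b aa bb f g ha hA haa hAA hb hB hbb hBB hf hg => ?_⟩
  obtain ⟨hfs, hfT⟩ := summable_and_tsum_sq_norm_le hT ha hA haa hAA hf
  obtain ⟨hgs, hgT⟩ := summable_and_tsum_sq_norm_le hT hb hB hbb hBB hg
  calc ‖∑' q : ℕ × ℤ, f q.1 q.2 * g q.1 q.2‖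
      ≤ (∑' q : ℕ × ℤ, ‖f q.1 q.2‖ ^ 2 + ∑' q : ℕ × ℤ, ‖g q.1 q.2‖ ^ 2) / 2 :=
        norm_tsum_mul_le_of_summable_sq hfs hgs
    _ ≤ 10 * T := by linarith
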